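/- Let p,q ≥ 0 with p+q < 1 and 0 < θ < 1, and let (α*, d*) be a minimizer of max{b1(α,d), b2(α,d)} over d ∈ (0,∞) and α ∈ (q, e^{−d}(1−p)+(1−e^{−d})q) (the optimization defining m_COMP). If e^{−d*}·p ≥ q, then m_COMP(n,θ,p,q) ≥ m_DD(n,θ,p,q). -/

import Mathlib

open Real Set

noncomputable section

/-- KL divergence between Bernoulli(r) and Bernoulli(s) (natural log, boundary by continuity). -/
def klBer (r s : ℝ) : ℝ := r * Real.log (r / s) + (1 - r) * Real.log ((1 - r) / (1 - s))

def b1 (θ q α d : ℝ) : ℝ := θ / (1 - θ) * (1 / (d * klBer α q))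

def b2 (θ p q α d : ℝ) : ℝ :=
  1 / (1 - θ) * (1 / (d * klBer α (Real.exp (-d) * (1 - p) + (1 - Real.exp (-d)) * q)))

def compSet (θ p q : ℝ) : Set ℝ :=
  {x | ∃ d α : ℝ, 0 < d ∧
    α ∈ Set.Ioo q (Real.exp (-d) * (1 - p) + (1 - Real.exp (-d)) * q) ∧
    x = max (b1 θ q α d) (b2 θ p q α d)}

def wDD (p q d : ℝ) : ℝ := Real.exp (-d) * p + (1 - Real.exp (-d)) * (1 - q)

def c1 (θ q α d : ℝ) : ℝ := θ / (1 - θ) * (1 / (d * klBer α q))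

def c2 (p q α d : ℝ) : ℝ := 1 / (d * klBer α (1 - wDD p q d))

def c3 (θ q β d : ℝ) : ℝ := θ / (1 - θ) * (1 / (d * klBer β ((1 - q) * Real.exp (-d))))

def c4 (θ p q α β d : ℝ) : ℝ :=
  sSup {x | ∃ z ∈ Set.Icc (1 - α) 1,
    x = 1 / (1 - θ) * (1 / (d * (klBer z (wDD p q d) +
      (if β > z * (Real.exp (-d) * p) / wDD p q d then
        z * klBer (β / z) (Real.exp (-d) * p / wDD p q d) else 0))))}

def ddSet (θ p q : ℝ) : Set ℝ :=
  {x | ∃ d α β : ℝ, 0 < d ∧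
    α ∈ Set.Ioo q (Real.exp (-d) * (1 - p) + (1 - Real.exp (-d)) * q) ∧
    β ∈ Set.Ioo 0 (Real.exp (-d) * (1 - q)) ∧
    x = max (max (c1 θ q α d) (c2 p q α d)) (max (c3 θ q β d) (c4 θ p q α β d))}

/-- `m_COMP(n,θ,p,q)` for `k = ⌈n^θ⌉`. -/
def mCOMP (n : ℕ) (θ p q : ℝ) : ℝ :=
  sInf (compSet θ p q) *
    ((⌈(n : ℝ) ^ θ⌉₊ : ℝ) * Real.log (n / (⌈(n : ℝ) ^ θ⌉₊ : ℝ)))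

/-- `m_DD(n,θ,p,q)` for `k = ⌈n^θ⌉`. -/
def mDD (n : ℕ) (θ p q : ℝ) : ℝ :=
  sInf (ddSet θ p q) *
    ((⌈(n : ℝ) ^ θ⌉₊ : ℝ) * Real.log (n / (⌈(n : ℝ) ^ θ⌉₊ : ℝ)))

/-!
Run DD with the COMP optimizer `(α, d)` and a small `β > 0`. Then `c1 = b1` and `c2 ≤ b2`.
The hypothesis `q ≤ e^{-d} p` is exactly `1 - w ≤ (1 - q) e^{-d}`; hence
`β ≤ α ≤ 1 - w ≤ (1 - q) e^{-d}`, and as `D_KL` grows away from the diagonal in both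
arguments, `c3 ≤ b2`. For `z ≥ 1 - α ≥ w` we have
`D_KL(z‖w) ≥ D_KL(1 - α‖w) = D_KL(α‖1 - w)`, while the extra term of `c4` is at least `-β`;
so `c4 ≤ 1 / (1 - θ) · 1 / (d (D_KL(α‖1 - w) - β))`, which tends to `b2` as `β → 0`.
-/

open Filter Topology InformationTheory

lemma mul_log_div_eq_mul_log_sub (a : ℝ) {b : ℝ} (hb : b ≠ 0) :
    a * log (a / b) = a * (log a - log b) := by
  rcases eq_or_ne a 0 with rfl | ha
  · simp
  · rw [log_div ha hb]

lemma klBer_eq_mul_log_sub (r : ℝ) {s : ℝ} (hs0 : s ≠ 0) (hs1 : s ≠ 1) :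
    klBer r s = r * (log r - log s) + (1 - r) * (log (1 - r) - log (1 - s)) := by
  rw [klBer, mul_log_div_eq_mul_log_sub r hs0,
    mul_log_div_eq_mul_log_sub (1 - r) (sub_ne_zero.2 hs1.symm)]

lemma klBer_eq_klFun (r : ℝ) {s : ℝ} (hs0 : 0 < s) (hs1 : s < 1) :
    klBer r s = s * klFun (r / s) + (1 - s) * klFun ((1 - r) / (1 - s)) := by
  have : 1 - s ≠ 0 := by linarith
  simp only [klBer, klFun_apply]
  field_simp
  ring

lemma klBer_nonneg {r s : ℝ} (hr0 : 0 ≤ r) (hr1 : r ≤ 1) (hs0 : 0 < s) (hs1 : s < 1) :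
    0 ≤ klBer r s := by
  rw [klBer_eq_klFun r hs0 hs1]
  have h1 := klFun_nonneg (div_nonneg hr0 hs0.le)
  have h2 := klFun_nonneg (div_nonneg (sub_nonneg.2 hr1) (sub_pos.2 hs1).le)
  have : 0 ≤ 1 - s := by linarith
  positivity

lemma klBer_pos {r s : ℝ} (hr0 : 0 ≤ r) (hr1 : r ≤ 1) (hs0 : 0 < s) (hs1 : s < 1)
    (hrs : r ≠ s) : 0 < klBer r s := by
  rw [klBer_eq_klFun r hs0 hs1]
  have hrs' : r / s ≠ 1 := fun h => hrs ((div_eq_one_iff_eq hs0.ne').1 h)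
  have h1 : 0 < klFun (r / s) :=
    (klFun_nonneg (div_nonneg hr0 hs0.le)).lt_of_ne'
      fun h => hrs' ((klFun_eq_zero_iff (div_nonneg hr0 hs0.le)).1 h)
  have h2 := klFun_nonneg (div_nonneg (sub_nonneg.2 hr1) (sub_pos.2 hs1).le)
  have : 0 < 1 - s := by linarith
  positivity

lemma neg_le_klBer {r s : ℝ} (hr0 : 0 ≤ r) (hr1 : r ≤ 1) (hs0 : 0 ≤ s) (hs1 : s < 1) :
    -r ≤ klBer r s := by
  rcases hs0.eq_or_lt with rfl | hs0
  -- the junk value `log (r / 0) = 0` leaves only the second summand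
  · have : klBer r 0 = klFun (1 - r) - r := by simp [klBer, klFun_apply]; ring
    linarith [klFun_nonneg (sub_nonneg.2 hr1)]
  · linarith [klBer_nonneg hr0 hr1 hs0 hs1]

lemma klBer_eq_klBer_add_klBer (t : ℝ) {r s : ℝ} (hr0 : r ≠ 0) (hr1 : r ≠ 1) (hs0 : s ≠ 0)
    (hs1 : s ≠ 1) :
    klBer t s =
      klBer t r + klBer r s + (t - r) * (log r - log s - (log (1 - r) - log (1 - s))) := by
  rw [klBer_eq_mul_log_sub t hs0 hs1, klBer_eq_mul_log_sub t hr0 hr1,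
    klBer_eq_mul_log_sub r hs0 hs1]
  ring

lemma monotoneOn_klBer_left {s : ℝ} (hs0 : 0 < s) (hs1 : s < 1) :
    MonotoneOn (fun r => klBer r s) (Icc s 1) := by
  intro r ⟨hsr, _⟩ t ⟨_, ht1⟩ hrt
  rcases (hrt.trans ht1).eq_or_lt with rfl | hr1
  · rw [le_antisymm hrt ht1]
  have hr0 : 0 < r := hs0.trans_le hsr
  have hlog : 0 ≤ log r - log s - (log (1 - r) - log (1 - s)) := by
    have := log_le_log hs0 hsr
    have := log_le_log (sub_pos.2 hr1) (by linarith : 1 - r ≤ 1 - s)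
    linarith
  show klBer r s ≤ klBer t s
  rw [klBer_eq_klBer_add_klBer t hr0.ne' hr1.ne hs0.ne' hs1.ne]
  nlinarith [klBer_nonneg (hr0.le.trans hrt) ht1 hr0 hr1, mul_nonneg (sub_nonneg.2 hrt) hlog]

lemma antitoneOn_klBer_left {s : ℝ} (hs0 : 0 < s) (hs1 : s < 1) :
    AntitoneOn (fun r => klBer r s) (Icc 0 s) := by
  intro r ⟨hr0, _⟩ t ⟨_, hts⟩ hrt
  rcases (hr0.trans hrt).eq_or_lt with rfl | ht0
  · rw [le_antisymm hrt hr0]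
  have ht1 : t < 1 := hts.trans_lt hs1
  have hlog : log t - log s - (log (1 - t) - log (1 - s)) ≤ 0 := by
    have := log_le_log ht0 hts
    have := log_le_log (by linarith) (by linarith : 1 - s ≤ 1 - t)
    linarith
  show klBer t s ≤ klBer r s
  rw [klBer_eq_klBer_add_klBer r ht0.ne' ht1.ne hs0.ne' hs1.ne]
  nlinarith [klBer_nonneg hr0 (hrt.trans ht1.le) ht0 ht1,
    mul_nonneg_of_nonpos_of_nonpos (sub_nonpos.2 hrt) hlog]

lemma monotoneOn_klBer_right {r : ℝ} (hr0 : 0 < r) : MonotoneOn (klBer r) (Ico r 1) := by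
  intro s ⟨hrs, hs1⟩ t ⟨_, ht1⟩ hst
  have hs0 : 0 < s := hr0.trans_le hrs
  have ht0 : 0 < t := hs0.trans_le hst
  rw [klBer_eq_mul_log_sub r hs0.ne' hs1.ne, klBer_eq_mul_log_sub r ht0.ne' ht1.ne]
  have hs1' : 0 < 1 - s := sub_pos.2 hs1
  have ht1' : 0 < 1 - t := sub_pos.2 ht1
  have h1 : r * (log t - log s) ≤ t - s :=
    calc r * (log t - log s) ≤ r * (t / s - 1) := by
          refine mul_le_mul_of_nonneg_left ?_ hr0.le
          rw [← log_div ht0.ne' hs0.ne']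
          exact log_le_sub_one_of_pos (div_pos ht0 hs0)
      _ = r / s * (t - s) := by field_simp
      _ ≤ 1 * (t - s) :=
          mul_le_mul_of_nonneg_right ((div_le_one hs0).2 hrs) (sub_nonneg.2 hst)
      _ = t - s := one_mul _
  have h2 : t - s ≤ (1 - r) * (log (1 - s) - log (1 - t)) :=
    calc t - s = 1 * (t - s) := (one_mul _).symm
      _ ≤ (1 - r) / (1 - s) * (t - s) :=
          mul_le_mul_of_nonneg_right ((one_le_div hs1').2 (by linarith)) (sub_nonneg.2 hst)
      _ = (1 - r) * (1 - (1 - t) / (1 - s)) := by field_simp; ring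
      _ ≤ (1 - r) * (log (1 - s) - log (1 - t)) := by
          refine mul_le_mul_of_nonneg_left ?_ (by linarith)
          have := log_le_sub_one_of_pos (div_pos ht1' hs1')
          rw [log_div ht1'.ne' hs1'.ne'] at this
          linarith
  linarith

lemma klBer_one_sub (r s : ℝ) : klBer (1 - r) (1 - s) = klBer r s := by
  simp only [klBer, sub_sub_cancel]
  ring

lemma neg_le_mul_klBer_div {β z s : ℝ} (hβ : 0 ≤ β) (hβz : β ≤ z) (hs0 : 0 ≤ s) (hs1 : s < 1) :
    -β ≤ z * klBer (β / z) s := by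
  rcases (hβ.trans hβz).eq_or_lt with rfl | hz
  · simp [le_antisymm hβz hβ]
  calc -β = z * -(β / z) := by field_simp
    _ ≤ z * klBer (β / z) s :=
      mul_le_mul_of_nonneg_left
        (neg_le_klBer (div_nonneg hβ hz.le) ((div_le_one hz).2 hβz) hs0 hs1) hz.le

lemma ceil_rpow_mul_log_nonneg {θ : ℝ} (hθ : θ ≤ 1) (n : ℕ) :
    0 ≤ (⌈(n : ℝ) ^ θ⌉₊ : ℝ) * log (n / (⌈(n : ℝ) ^ θ⌉₊ : ℝ)) := by
  rcases Nat.eq_zero_or_pos n with rfl | hn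
  · simp
  have hn1 : (1 : ℝ) ≤ n := by exact_mod_cast hn
  have hk0 : (0 : ℝ) < ⌈(n : ℝ) ^ θ⌉₊ := by
    exact_mod_cast Nat.ceil_pos.2 (rpow_pos_of_pos (by linarith) θ)
  have hkn : (⌈(n : ℝ) ^ θ⌉₊ : ℝ) ≤ n := by
    exact_mod_cast Nat.ceil_le.2 (by simpa using rpow_le_rpow_of_exponent_le hn1 hθ)
  exact mul_nonneg hk0.le (log_nonneg ((one_le_div hk0).2 hkn))

section Parameters

variable {θ p q d α β : ℝ}

lemma one_sub_wDD (p q d : ℝ) : 1 - wDD p q d = exp (-d) * (1 - p) + (1 - exp (-d)) * q := by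
  rw [wDD]
  ring

lemma exp_neg_mul_lt_wDD (hq1 : q < 1) (hd : 0 < d) : exp (-d) * p < wDD p q d := by
  have : exp (-d) < 1 := exp_lt_one_iff.2 (neg_neg_of_pos hd)
  rw [wDD]
  nlinarith

lemma wDD_pos (hp : 0 ≤ p) (hq1 : q < 1) (hd : 0 < d) : 0 < wDD p q d :=
  (mul_nonneg (exp_pos (-d)).le hp).trans_lt (exp_neg_mul_lt_wDD hq1 hd)

lemma wDD_lt_one (hp1 : p < 1) (hq : 0 ≤ q) (hd : 0 < d) : wDD p q d < 1 := by
  have : exp (-d) < 1 := exp_lt_one_iff.2 (neg_neg_of_pos hd)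
  have := exp_pos (-d)
  rw [wDD]
  nlinarith

lemma one_sub_wDD_le (hcond : q ≤ exp (-d) * p) : 1 - wDD p q d ≤ (1 - q) * exp (-d) := by
  rw [wDD]
  linarith

lemma klBer_one_sub_wDD_pos (hp : 0 ≤ p) (hq : 0 ≤ q) (hpq : p + q < 1) (hd : 0 < d)
    (hα : α ∈ Ioo q (exp (-d) * (1 - p) + (1 - exp (-d)) * q)) :
    0 < klBer α (1 - wDD p q d) := by
  rw [← one_sub_wDD] at hα
  obtain ⟨hqα, hαw⟩ := hα
  have hw0 : 0 < wDD p q d := wDD_pos hp (by linarith) hd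
  have hw1 : wDD p q d < 1 := wDD_lt_one (by linarith) hq hd
  exact klBer_pos (hq.trans hqα.le) (by linarith) (by linarith) (by linarith) hαw.ne

lemma b2_eq (θ p q α d : ℝ) :
    b2 θ p q α d = 1 / (1 - θ) * (1 / (d * klBer α (1 - wDD p q d))) := by
  rw [b2, one_sub_wDD]

lemma c2_le_b2 (hθ0 : 0 ≤ θ) (hθ1 : θ < 1) (hd : 0 < d)
    (hK : 0 < klBer α (1 - wDD p q d)) : c2 p q α d ≤ b2 θ p q α d := by
  rw [b2_eq, c2]
  exact le_mul_of_one_le_left (by positivity) (one_le_one_div (by linarith) (by linarith))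

lemma c3_le_b2 (hθ0 : 0 ≤ θ) (hθ1 : θ < 1) (hq : 0 ≤ q) (hq1 : q < 1) (hd : 0 < d)
    (hβ0 : 0 < β) (hβα : β ≤ α) (hαw : α ≤ 1 - wDD p q d) (hcond : q ≤ exp (-d) * p)
    (hK : 0 < klBer α (1 - wDD p q d)) : c3 θ q β d ≤ b2 θ p q α d := by
  set t := (1 - q) * exp (-d)
  have ht0 : 0 < t := mul_pos (by linarith) (exp_pos _)
  have ht1 : t < 1 := by
    have : exp (-d) < 1 := exp_lt_one_iff.2 (neg_neg_of_pos hd)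
    nlinarith [exp_pos (-d)]
  have hwt : 1 - wDD p q d ≤ t := one_sub_wDD_le hcond
  have hα0 : 0 < α := hβ0.trans_le hβα
  have hKt : klBer α (1 - wDD p q d) ≤ klBer β t :=
    calc klBer α (1 - wDD p q d) ≤ klBer α t :=
          monotoneOn_klBer_right hα0 ⟨hαw, hwt.trans_lt ht1⟩ ⟨hαw.trans hwt, ht1⟩ hwt
      _ ≤ klBer β t :=
          antitoneOn_klBer_left ht0 ht1 ⟨hβ0.le, hβα.trans (hαw.trans hwt)⟩
            ⟨hα0.le, hαw.trans hwt⟩ hβα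
  rw [b2_eq, c3]
  calc θ / (1 - θ) * (1 / (d * klBer β t))
      ≤ θ / (1 - θ) * (1 / (d * klBer α (1 - wDD p q d))) := by gcongr
    _ ≤ 1 / (1 - θ) * (1 / (d * klBer α (1 - wDD p q d))) := by gcongr

lemma c4_le (hθ1 : θ < 1) (hp : 0 ≤ p) (hq1 : q < 1) (hd : 0 < d) (hα0 : 0 < α) (hβ0 : 0 < β)
    (hβα : β ≤ 1 - α) (hαw : α ≤ 1 - wDD p q d) (hβK : β < klBer α (1 - wDD p q d)) :
    c4 θ p q α β d ≤ 1 / (1 - θ) * (1 / (d * (klBer α (1 - wDD p q d) - β))) := by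
  set w := wDD p q d
  have hw0 : 0 < w := wDD_pos hp hq1 hd
  have hw1 : w < 1 := by linarith
  have hs0 : 0 ≤ exp (-d) * p / w := div_nonneg (mul_nonneg (exp_pos _).le hp) hw0.le
  have hs1 : exp (-d) * p / w < 1 := (div_lt_one hw0).2 (exp_neg_mul_lt_wDD hq1 hd)
  refine Real.sSup_le ?_ (by have := mul_pos hd (sub_pos.2 hβK); positivity)
  rintro _ ⟨z, ⟨hαz, hz1⟩, rfl⟩
  have hKz : klBer α (1 - w) ≤ klBer z w := by
    rw [← klBer_one_sub α (1 - w), sub_sub_cancel]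
    exact monotoneOn_klBer_left hw0 hw1 ⟨by linarith, by linarith⟩ ⟨by linarith, hz1⟩ hαz
  have hextra : -β ≤ if β > z * (exp (-d) * p) / w then
      z * klBer (β / z) (exp (-d) * p / w) else 0 := by
    split_ifs
    · exact neg_le_mul_klBer_div hβ0.le (hβα.trans hαz) hs0 hs1
    · linarith
  have := mul_pos hd (sub_pos.2 hβK)
  gcongr
  linarith

lemma ddSet_bddBelow (hp : 0 ≤ p) (hq : 0 ≤ q) (hpq : p + q < 1) : BddBelow (ddSet θ p q) := by
  refine ⟨0, ?_⟩
  rintro _ ⟨d, α, β, hd, hα, -, rfl⟩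
  have hc2 : 0 < c2 p q α d := one_div_pos.2 (mul_pos hd (klBer_one_sub_wDD_pos hp hq hpq hd hα))
  exact hc2.le.trans ((le_max_right _ _).trans (le_max_left _ _))

lemma sInf_ddSet_le (hp : 0 ≤ p) (hq : 0 ≤ q) (hpq : p + q < 1) (hθ0 : 0 ≤ θ) (hθ1 : θ < 1)
    (hd : 0 < d) (hα : α ∈ Ioo q (exp (-d) * (1 - p) + (1 - exp (-d)) * q))
    (hcond : q ≤ exp (-d) * p) :
    sInf (ddSet θ p q) ≤ max (b1 θ q α d) (b2 θ p q α d) := by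
  set K := klBer α (1 - wDD p q d)
  have hK : 0 < K := klBer_one_sub_wDD_pos hp hq hpq hd hα
  have hαw : α < 1 - wDD p q d := one_sub_wDD p q d ▸ hα.2
  have hα0 : 0 < α := hq.trans_lt hα.1
  have hα1 : 0 < 1 - α := by linarith [wDD_pos (q := q) hp (by linarith) hd]
  set g := fun β => max (b1 θ q α d) (1 / (1 - θ) * (1 / (d * (K - β))))
  have hg : Tendsto g (𝓝[>] 0) (𝓝 (max (b1 θ q α d) (b2 θ p q α d))) := by
    have : ContinuousAt g 0 := by
      have : d * (K - 0) ≠ 0 := by simp [hd.ne', hK.ne']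
      fun_prop (disch := exact this)
    simpa [g, b2_eq] using this.tendsto.mono_left nhdsWithin_le_nhds
  refine ge_of_tendsto hg ?_
  filter_upwards [Ioo_mem_nhdsGT (lt_min (lt_min hα0 hα1) hK)] with β ⟨hβ0, hβ⟩
  have hβα : β < α := hβ.trans_le ((min_le_left _ _).trans (min_le_left _ _))
  have hβα' : β < 1 - α := hβ.trans_le ((min_le_left _ _).trans (min_le_right _ _))
  have hβK : β < K := hβ.trans_le (min_le_right _ _)
  have hb2 : b2 θ p q α d ≤ 1 / (1 - θ) * (1 / (d * (K - β))) := by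
    rw [b2_eq]
    have := mul_pos hd (sub_pos.2 hβK)
    gcongr
    linarith
  have hmem : max (max (c1 θ q α d) (c2 p q α d)) (max (c3 θ q β d) (c4 θ p q α β d)) ∈
      ddSet θ p q := by
    have ht := one_sub_wDD_le (p := p) hcond
    exact ⟨d, α, β, hd, hα, ⟨hβ0, by linarith⟩, rfl⟩
  refine (csInf_le (ddSet_bddBelow hp hq hpq) hmem).trans ?_
  have hq1 : q < 1 := by linarith
  refine max_le (max_le (le_max_left _ _) ?_) (max_le ?_ ?_)
  · exact (c2_le_b2 hθ0 hθ1 hd hK).trans (hb2.trans (le_max_right _ _))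
  · exact (c3_le_b2 hθ0 hθ1 hq hq1 hd hβ0 hβα.le hαw.le hcond hK).trans
      (hb2.trans (le_max_right _ _))
  · exact (c4_le hθ1 hp hq1 hd hα0 hβ0 hβα'.le hαw.le hβK).trans (le_max_right _ _)

end Parameters

/-- **DD dominates COMP** (Proposition 2.13).  If `(α*, d*)` minimizes the COMP
optimization and `e^{-d*}·p ≥ q`, then `m_COMP ≥ m_DD`. -/
theorem comp_ge_dd
    (p q θ : ℝ)
    (hp : 0 ≤ p) (hq : 0 ≤ q) (hpq : p + q < 1)
    (hθ0 : 0 < θ) (hθ1 : θ < 1)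
    (d α : ℝ) (hd : 0 < d)
    (hα : α ∈ Set.Ioo q (Real.exp (-d) * (1 - p) + (1 - Real.exp (-d)) * q))
    (hopt : IsLeast (compSet θ p q) (max (b1 θ q α d) (b2 θ p q α d)))
    (hcond : q ≤ Real.exp (-d) * p) :
    ∀ n : ℕ, mDD n θ p q ≤ mCOMP n θ p q := by
  intro n
  have h := sInf_ddSet_le hp hq hpq hθ0.le hθ1 hd hα hcond
  rw [← hopt.csInf_eq] at h
  rw [mDD, mCOMP]
  exact mul_le_mul_of_nonneg_right h (ceil_rpow_mul_log_nonneg hθ1.le n)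

end
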